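/- Let o, d, n be positive integers, β > 0, Y ∈ ℝ^{o×n}, Φ ∈ ℝ^{d×n}, and set Y_⊥ = Y(I − Φᵀ(ΦΦᵀ + βI)⁻¹Φ). Then the gradient of the reduced loss L* at Φ (the matrix ∇L*(Φ) ∈ ℝ^{d×n} representing the derivative DL*(Φ) via the trace inner product) satisfies ∇L*(Φ) = −2 (ΦΦᵀ + βI)⁻¹ Φ Yᵀ Y_⊥. -/

import Mathlib

/-!
Write `A = ΦΦᵀ + βI` and `P = Φᵀ A⁻¹ Φ` (the ridge hat matrix). Since `W*` solves the normal
equations `W* A = YΦᵀ`, the fit and penalty terms of `L*` collapse and `L*(Φ) = tr(YYᵀ) - tr(Y P Yᵀ)`.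
Differentiating `P` with the product rule and `d(A⁻¹) = -A⁻¹ (dA) A⁻¹` gives `dP = Mᵀ + M` with
`M = Φᵀ A⁻¹ Ψ (I - P)`, so `dL*(Φ)[Ψ] = -2 tr(Y M Yᵀ)`, and cycling the trace puts this in the form
`tr(Gᵀ Ψ)` with `G = -2 A⁻¹ Φ Yᵀ Y (I - P) = -2 A⁻¹ Φ Yᵀ Y_⊥`.
-/

open Matrix BigOperators

attribute [local instance] Matrix.frobeniusNormedAddCommGroup Matrix.frobeniusNormedSpace

/-- Squared Frobenius norm of a real matrix. -/
noncomputable def sqFrob {m n : ℕ} (A : Matrix (Fin m) (Fin n) ℝ) : ℝ :=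
  ∑ i, ∑ j, (A i j) ^ 2

/-- The closed-form ridge solution `W*(Φ) = YΦᵀ(ΦΦᵀ + βI)⁻¹`. -/
noncomputable def Wstar {o d n : ℕ} (β : ℝ) (Y : Matrix (Fin o) (Fin n) ℝ)
    (Φ : Matrix (Fin d) (Fin n) ℝ) : Matrix (Fin o) (Fin d) ℝ :=
  Y * Φᵀ * (Φ * Φᵀ + β • (1 : Matrix (Fin d) (Fin d) ℝ))⁻¹

/-- The reduced loss `L*(Φ) = ‖Y − W*(Φ)Φ‖_F² + β‖W*(Φ)‖_F²`. -/
noncomputable def Lstar {o d n : ℕ} (β : ℝ) (Y : Matrix (Fin o) (Fin n) ℝ)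
    (Φ : Matrix (Fin d) (Fin n) ℝ) : ℝ :=
  sqFrob (Y - Wstar β Y Φ * Φ) + β * sqFrob (Wstar β Y Φ)

attribute [local instance] Matrix.frobeniusNormedRing Matrix.frobeniusNormedAlgebra

/- `fderiv` on matrices is elaborated with the plain `Matrix` instances, while the generic
calculus lemmas see those coming from the Frobenius norm. The two agree only up to unfolding,
hence the lemmas below keep matrix domains and are proved with `erw` and `rfl`. -/
section MatrixCalculus

variable {𝕜 : Type*} [RCLike 𝕜] {p q l m n k : Type*} [Fintype p] [Fintype q] [Fintype l]
  [Fintype m] [Fintype n] [Fintype k] {x v : Matrix p q 𝕜}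

variable (𝕜 l m n) in
noncomputable def Matrix.mulCLM : Matrix l m 𝕜 →L[𝕜] Matrix m n 𝕜 →L[𝕜] Matrix l n 𝕜 :=
  (mulLinearMap 𝕜).mkContinuous₂ 1 fun A B => by simpa using frobenius_norm_mul A B

omit [Fintype p] [Fintype q] in
theorem fderiv_matrix_id_apply : fderiv 𝕜 (fun y : Matrix p q 𝕜 => y) x v = v := by
  erw [fderiv_fun_id]
  rfl

theorem fderiv_matrix_add_const_apply {f : Matrix p q 𝕜 → Matrix m n 𝕜} (c : Matrix m n 𝕜) :
    fderiv 𝕜 (fun y => f y + c) x v = fderiv 𝕜 f x v := by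
  erw [fderiv_add_const]
  rfl

theorem fderiv_const_sub_apply {f : Matrix p q 𝕜 → 𝕜} (c : 𝕜) :
    fderiv 𝕜 (fun y => c - f y) x v = -fderiv 𝕜 f x v := by
  erw [fderiv_const_sub]
  rfl

theorem HasFDerivAt.matrix_mul {f : Matrix p q 𝕜 → Matrix l m 𝕜}
    {g : Matrix p q 𝕜 → Matrix m n 𝕜} {f' : Matrix p q 𝕜 →L[𝕜] Matrix l m 𝕜}
    {g' : Matrix p q 𝕜 →L[𝕜] Matrix m n 𝕜} (hf : HasFDerivAt f f' x) (hg : HasFDerivAt g g' x) :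
    HasFDerivAt (fun y => f y * g y)
      ((mulCLM 𝕜 l m n).precompR _ (f x) g' + (mulCLM 𝕜 l m n).precompL _ f' (g x)) x :=
  (mulCLM 𝕜 l m n).hasFDerivAt_of_bilinear hf hg

theorem DifferentiableAt.matrix_mul {f : Matrix p q 𝕜 → Matrix l m 𝕜}
    {g : Matrix p q 𝕜 → Matrix m n 𝕜} (hf : DifferentiableAt 𝕜 f x)
    (hg : DifferentiableAt 𝕜 g x) : DifferentiableAt 𝕜 (fun y => f y * g y) x :=
  (hf.hasFDerivAt.matrix_mul hg.hasFDerivAt).differentiableAt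

theorem fderiv_matrix_mul_apply {f : Matrix p q 𝕜 → Matrix l m 𝕜}
    {g : Matrix p q 𝕜 → Matrix m n 𝕜} (hf : DifferentiableAt 𝕜 f x)
    (hg : DifferentiableAt 𝕜 g x) :
    fderiv 𝕜 (fun y => f y * g y) x v = f x * fderiv 𝕜 g x v + fderiv 𝕜 f x v * g x := by
  erw [(hf.hasFDerivAt.matrix_mul hg.hasFDerivAt).fderiv]
  rfl

theorem fderiv_matrix_const_mul_mul_const_apply {f : Matrix p q 𝕜 → Matrix m n 𝕜}
    (hf : DifferentiableAt 𝕜 f x) (A : Matrix l m 𝕜) (B : Matrix n k 𝕜) :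
    fderiv 𝕜 (fun y => A * f y * B) x v = A * fderiv 𝕜 f x v * B := by
  rw [fderiv_matrix_mul_apply ((differentiableAt_const A).matrix_mul hf) (differentiableAt_const B),
    fderiv_matrix_mul_apply (differentiableAt_const A) hf]
  erw [fderiv_const_apply, fderiv_const_apply]
  simp

theorem HasFDerivAt.matrix_transpose {f : Matrix p q 𝕜 → Matrix m n 𝕜}
    {f' : Matrix p q 𝕜 →L[𝕜] Matrix m n 𝕜} (hf : HasFDerivAt f f' x) :
    HasFDerivAt (fun y => (f y)ᵀ)
      ((transposeLinearEquiv m n 𝕜 𝕜).toLinearMap.toContinuousLinearMap.comp f') x :=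
  (transposeLinearEquiv m n 𝕜 𝕜).toLinearMap.toContinuousLinearMap.hasFDerivAt.comp x hf

theorem DifferentiableAt.matrix_transpose {f : Matrix p q 𝕜 → Matrix m n 𝕜}
    (hf : DifferentiableAt 𝕜 f x) : DifferentiableAt 𝕜 (fun y => (f y)ᵀ) x :=
  hf.hasFDerivAt.matrix_transpose.differentiableAt

theorem fderiv_matrix_transpose_apply {f : Matrix p q 𝕜 → Matrix m n 𝕜}
    (hf : DifferentiableAt 𝕜 f x) : fderiv 𝕜 (fun y => (f y)ᵀ) x v = (fderiv 𝕜 f x v)ᵀ := by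
  erw [hf.hasFDerivAt.matrix_transpose.fderiv]
  rfl

theorem HasFDerivAt.matrix_trace {f : Matrix p q 𝕜 → Matrix n n 𝕜}
    {f' : Matrix p q 𝕜 →L[𝕜] Matrix n n 𝕜} (hf : HasFDerivAt f f' x) :
    HasFDerivAt (fun y => trace (f y)) ((traceLinearMap n 𝕜 𝕜).toContinuousLinearMap.comp f') x :=
  (traceLinearMap n 𝕜 𝕜).toContinuousLinearMap.hasFDerivAt.comp x hf

theorem DifferentiableAt.matrix_trace {f : Matrix p q 𝕜 → Matrix n n 𝕜}
    (hf : DifferentiableAt 𝕜 f x) : DifferentiableAt 𝕜 (fun y => trace (f y)) x :=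
  hf.hasFDerivAt.matrix_trace.differentiableAt

theorem fderiv_matrix_trace_apply {f : Matrix p q 𝕜 → Matrix n n 𝕜}
    (hf : DifferentiableAt 𝕜 f x) :
    fderiv 𝕜 (fun y => trace (f y)) x v = trace (fderiv 𝕜 f x v) := by
  erw [hf.hasFDerivAt.matrix_trace.fderiv]
  rfl

variable [DecidableEq n]

theorem DifferentiableAt.matrix_inv {f : Matrix p q 𝕜 → Matrix n n 𝕜}
    (hf : DifferentiableAt 𝕜 f x) (hx : IsUnit (f x)) :
    DifferentiableAt 𝕜 (fun y => (f y)⁻¹) x := by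
  simp only [nonsing_inv_eq_ringInverse]
  exact DifferentiableAt.inverse (h := f) hf hx

theorem fderiv_matrix_inv_apply {f : Matrix p q 𝕜 → Matrix n n 𝕜}
    (hf : DifferentiableAt 𝕜 f x) (hx : IsUnit (f x)) :
    fderiv 𝕜 (fun y => (f y)⁻¹) x v = -((f x)⁻¹ * fderiv 𝕜 f x v * (f x)⁻¹) := by
  have h : HasFDerivAt (fun y => (f y)⁻¹)
      ((-ContinuousLinearMap.mulLeftRight 𝕜 _ (f x)⁻¹ (f x)⁻¹).comp (fderiv 𝕜 f x)) x := by
    simp only [nonsing_inv_eq_ringInverse]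
    rw [← hx.unit_spec, Ring.inverse_unit]
    exact (hasFDerivAt_ringInverse hx.unit).comp x hf.hasFDerivAt
  erw [h.fderiv]
  rfl

end MatrixCalculus

theorem trace_mul_transpose_add_self_mul_transpose {m n : Type*} [Fintype m] [Fintype n]
    (Y : Matrix m n ℝ) (M : Matrix n n ℝ) :
    trace (Y * (Mᵀ + M) * Yᵀ) = 2 * trace (Y * M * Yᵀ) := by
  have h : trace (Y * Mᵀ * Yᵀ) = trace (Y * M * Yᵀ) := by
    rw [← trace_transpose]
    simp only [transpose_mul, transpose_transpose, Matrix.mul_assoc]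
  rw [Matrix.mul_add, Matrix.add_mul, trace_add, h]
  ring

section RidgeHat

variable {m n : Type*} [Fintype m] [DecidableEq m] [Fintype n]

noncomputable def ridgeHat (β : ℝ) (X : Matrix m n ℝ) : Matrix n n ℝ :=
  Xᵀ * (X * Xᵀ + β • 1)⁻¹ * X

theorem posDef_mul_transpose_add_smul_one {β : ℝ} (hβ : 0 < β) (X : Matrix m n ℝ) :
    (X * Xᵀ + β • 1).PosDef := by
  have hX : (X * Xᵀ).PosSemidef := by
    simpa only [conjTranspose_eq_transpose_of_trivial] using posSemidef_self_mul_conjTranspose X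
  refine PosDef.posSemidef_add hX ?_
  rw [smul_one_eq_diagonal]
  exact posDef_diagonal_iff.mpr fun _ => hβ

theorem mul_transpose_add_smul_one_inv_transpose (β : ℝ) (X : Matrix m n ℝ) :
    ((X * Xᵀ + β • 1)⁻¹)ᵀ = (X * Xᵀ + β • 1)⁻¹ := by
  rw [transpose_nonsing_inv]
  simp [transpose_add, transpose_mul]

theorem ridgeHat_transpose (β : ℝ) (X : Matrix m n ℝ) : (ridgeHat β X)ᵀ = ridgeHat β X := by
  simp only [ridgeHat, transpose_mul, transpose_transpose,
    mul_transpose_add_smul_one_inv_transpose, Matrix.mul_assoc]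

theorem differentiableAt_mul_transpose_add_smul_one (β : ℝ) (X : Matrix m n ℝ) :
    DifferentiableAt ℝ (fun Z : Matrix m n ℝ => Z * Zᵀ + β • 1) X :=
  (differentiableAt_fun_id.matrix_mul differentiableAt_fun_id.matrix_transpose).add_const _

theorem fderiv_mul_transpose_add_smul_one_apply (β : ℝ) (X V : Matrix m n ℝ) :
    fderiv ℝ (fun Z : Matrix m n ℝ => Z * Zᵀ + β • 1) X V = X * Vᵀ + V * Xᵀ := by
  rw [fderiv_matrix_add_const_apply,
    fderiv_matrix_mul_apply differentiableAt_fun_id differentiableAt_fun_id.matrix_transpose,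
    fderiv_matrix_transpose_apply differentiableAt_fun_id, fderiv_matrix_id_apply]

theorem differentiableAt_ridgeHat {β : ℝ} (hβ : 0 < β) (X : Matrix m n ℝ) :
    DifferentiableAt ℝ (ridgeHat β) X :=
  (differentiableAt_fun_id.matrix_transpose.matrix_mul
    ((differentiableAt_mul_transpose_add_smul_one β X).matrix_inv
      (posDef_mul_transpose_add_smul_one hβ X).isUnit)).matrix_mul differentiableAt_fun_id

theorem fderiv_ridgeHat_apply [DecidableEq n] {β : ℝ} (hβ : 0 < β) (X V : Matrix m n ℝ) :
    fderiv ℝ (ridgeHat β) X V =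
      (Xᵀ * (X * Xᵀ + β • 1)⁻¹ * V * (1 - ridgeHat β X))ᵀ +
        Xᵀ * (X * Xᵀ + β • 1)⁻¹ * V * (1 - ridgeHat β X) := by
  have hA := (posDef_mul_transpose_add_smul_one hβ X).isUnit
  have hG := differentiableAt_mul_transpose_add_smul_one β X
  have hP := ridgeHat_transpose β X
  rw [transpose_mul, transpose_sub, transpose_one, hP, transpose_mul, transpose_mul,
    mul_transpose_add_smul_one_inv_transpose, transpose_transpose]
  unfold ridgeHat
  rw [fderiv_matrix_mul_apply (differentiableAt_fun_id.matrix_transpose.matrix_mul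
      (hG.matrix_inv hA)) differentiableAt_fun_id,
    fderiv_matrix_mul_apply differentiableAt_fun_id.matrix_transpose (hG.matrix_inv hA),
    fderiv_matrix_inv_apply hG hA, fderiv_mul_transpose_add_smul_one_apply,
    fderiv_matrix_transpose_apply differentiableAt_fun_id, fderiv_matrix_id_apply]
  simp only [Matrix.mul_add, Matrix.add_mul, Matrix.mul_sub, Matrix.sub_mul, Matrix.mul_neg,
    Matrix.neg_mul, Matrix.one_mul, Matrix.mul_one, Matrix.mul_assoc]
  abel

end RidgeHat

theorem sqFrob_eq_trace {m n : ℕ} (A : Matrix (Fin m) (Fin n) ℝ) :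
    sqFrob A = trace (A * Aᵀ) := by
  simp [sqFrob, trace, mul_apply, sq]

theorem Lstar_eq_trace_sub_trace_ridgeHat {o d n : ℕ} {β : ℝ} (hβ : 0 < β)
    (Y : Matrix (Fin o) (Fin n) ℝ) :
    Lstar β Y = fun X : Matrix (Fin d) (Fin n) ℝ =>
      trace (Y * Yᵀ) - trace (Y * ridgeHat β X * Yᵀ) := by
  funext X
  set W := Wstar β Y X
  have hnormal : W * (X * Xᵀ + β • 1) = Y * Xᵀ := by
    rw [show W = Y * Xᵀ * (X * Xᵀ + β • 1)⁻¹ from rfl, Matrix.mul_assoc, nonsing_inv_mul _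
      ((isUnit_iff_isUnit_det _).mp (posDef_mul_transpose_add_smul_one hβ X).isUnit),
      Matrix.mul_one]
  have hfit : trace (W * X * (W * X)ᵀ) + β * trace (W * Wᵀ) = trace (Y * Xᵀ * Wᵀ) := by
    rw [← hnormal]
    simp only [Matrix.mul_add, Matrix.add_mul, Matrix.mul_smul, Matrix.smul_mul, Matrix.mul_one,
      transpose_mul, trace_add, trace_smul, smul_eq_mul, Matrix.mul_assoc]
  have hcross : trace (W * X * Yᵀ) = trace (Y * ridgeHat β X * Yᵀ) := by
    simp only [W, Wstar, ridgeHat, Matrix.mul_assoc]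
  have hcross_transpose : trace (Y * (W * X)ᵀ) = trace (W * X * Yᵀ) := by
    rw [← trace_transpose, transpose_mul, transpose_transpose]
  have hcross_assoc : trace (Y * Xᵀ * Wᵀ) = trace (Y * (W * X)ᵀ) := by
    rw [transpose_mul, Matrix.mul_assoc]
  rw [Lstar, sqFrob_eq_trace, sqFrob_eq_trace, transpose_sub, Matrix.sub_mul, Matrix.mul_sub,
    Matrix.mul_sub, trace_sub, trace_sub, trace_sub]
  linarith

theorem stmt_5_general (o d n : ℕ)
    (β : ℝ) (hβ : 0 < β)
    (Y : Matrix (Fin o) (Fin n) ℝ) (Φ : Matrix (Fin d) (Fin n) ℝ) :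
    DifferentiableAt ℝ (Lstar β Y) Φ ∧
    ∀ Ψ : Matrix (Fin d) (Fin n) ℝ,
      fderiv ℝ (Lstar β Y) Φ Ψ =
        trace ((((-2 : ℝ) • ((Φ * Φᵀ + β • (1 : Matrix (Fin d) (Fin d) ℝ))⁻¹ * Φ * Yᵀ *
          (Y * ((1 : Matrix (Fin n) (Fin n) ℝ) -
            Φᵀ * (Φ * Φᵀ + β • (1 : Matrix (Fin d) (Fin d) ℝ))⁻¹ * Φ))))ᵀ) * Ψ) := by
  set N := (Φ * Φᵀ + β • (1 : Matrix (Fin d) (Fin d) ℝ))⁻¹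
  rw [show Φᵀ * N * Φ = ridgeHat β Φ from rfl]
  set Q := 1 - ridgeHat β Φ
  have hP := differentiableAt_ridgeHat hβ Φ
  have hYPY : DifferentiableAt ℝ (fun X => Y * ridgeHat β X * Yᵀ) Φ :=
    ((differentiableAt_const Y).matrix_mul hP).matrix_mul (differentiableAt_const Yᵀ)
  have hcycle (Ψ : Matrix (Fin d) (Fin n) ℝ) :
      trace (Y * (Φᵀ * N * Ψ * Q) * Yᵀ) = trace ((N * Φ * Yᵀ * (Y * Q))ᵀ * Ψ) := by
    have hQ : Qᵀ = Q := by rw [transpose_sub, transpose_one, ridgeHat_transpose]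
    calc trace (Y * (Φᵀ * N * Ψ * Q) * Yᵀ) = trace ((Y * Φᵀ * N * Ψ) * (Q * Yᵀ)) := by
          simp only [Matrix.mul_assoc]
      _ = trace ((Q * Yᵀ) * (Y * Φᵀ * N * Ψ)) := trace_mul_comm _ _
      _ = trace ((N * Φ * Yᵀ * (Y * Q))ᵀ * Ψ) := by
          simp only [transpose_mul, transpose_transpose, hQ, N,
            mul_transpose_add_smul_one_inv_transpose, Matrix.mul_assoc]
  rw [Lstar_eq_trace_sub_trace_ridgeHat hβ Y]
  refine ⟨hYPY.matrix_trace.const_sub _, fun Ψ => ?_⟩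
  rw [fderiv_const_sub_apply, fderiv_matrix_trace_apply hYPY,
    fderiv_matrix_const_mul_mul_const_apply hP, fderiv_ridgeHat_apply hβ,
    trace_mul_transpose_add_self_mul_transpose, hcycle, transpose_smul, smul_mul, trace_smul,
    smul_eq_mul]
  ring

theorem stmt_5 (o d n : ℕ) (ho : 0 < o) (hd : 0 < d) (hn : 0 < n)
    (β : ℝ) (hβ : 0 < β)
    (Y : Matrix (Fin o) (Fin n) ℝ) (Φ : Matrix (Fin d) (Fin n) ℝ) :
    DifferentiableAt ℝ (Lstar β Y) Φ ∧
    ∀ Ψ : Matrix (Fin d) (Fin n) ℝ,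
      fderiv ℝ (Lstar β Y) Φ Ψ =
        trace ((((-2 : ℝ) • ((Φ * Φᵀ + β • (1 : Matrix (Fin d) (Fin d) ℝ))⁻¹ * Φ * Yᵀ *
          (Y * ((1 : Matrix (Fin n) (Fin n) ℝ) -
            Φᵀ * (Φ * Φᵀ + β • (1 : Matrix (Fin d) (Fin d) ℝ))⁻¹ * Φ))))ᵀ) * Ψ) :=
  stmt_5_general o d n β hβ Y Φ
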